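/- Let X = {1, …, n} (n ≥ 1) be equipped with the discrete metric d(i, j) = 𝟙(i ≠ j), and let P be the probability measure assigning mass p_i ≥ 0 to point i, with Σ_{i=1}^n p_i = 1. Then the metric spatial depth of the point 1 equals D(1; P) = (1/2)(1 − Σ_{i=1}^n p_i²) + p₁, and this value lies in [0, 1]. Moreover, D(1; P) = 0 if and only if p_i = 1 for exactly one i ∈ {2, …, n}, and D(1; P) = 1 if and only if p₁ = 1. -/
import Mathlib


open scoped Classical

/-- The kernel of the metric spatial depth, for a general distance function `d`. -/
noncomputable def mhGen {X : Type*} (d : X → X → ℝ) (x₁ x₂ x₃ : X) : ℝ :=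
  if x₃ = x₁ ∨ x₃ = x₂ then 0
  else (d x₁ x₃ ^ 2 + d x₂ x₃ ^ 2 - d x₁ x₂ ^ 2) / (d x₁ x₃ * d x₂ x₃)

/-- The discrete metric on `Fin n`. -/
noncomputable def discDist {n : ℕ} (i j : Fin n) : ℝ := if i = j then 0 else 1

/-- The metric spatial depth of the point `μ` of `Fin n` under the discrete metric, for the
distribution putting mass `p i` on the point `i`. -/
noncomputable def discDepth {n : ℕ} (p : Fin n → ℝ) (μ : Fin n) : ℝ :=
  1 - (1 / 2) * ∑ i, ∑ j, p i * p j * mhGen discDist i j μ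

theorem msDepth_discrete_metric (n : ℕ) [NeZero n] (p : Fin n → ℝ)
    (hp0 : ∀ i, 0 ≤ p i) (hp1 : ∑ i, p i = 1) :
    discDepth p 0 = (1 / 2) * (1 - ∑ i, p i ^ 2) + p 0 ∧
    discDepth p 0 ∈ Set.Icc (0 : ℝ) 1 ∧
    (discDepth p 0 = 0 ↔ ∃! i : Fin n, i ≠ 0 ∧ p i = 1) ∧
    (discDepth p 0 = 1 ↔ p 0 = 1) := by
  have hle1 : ∀ i, p i ≤ 1 :=
    fun i => hp1 ▸ Finset.single_le_sum (fun j _ => hp0 j) (Finset.mem_univ i)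
  have hsqle : ∀ i, p i ^ 2 ≤ p i := by
    intro i; nlinarith [hp0 i, hle1 i]
  have hSle : ∑ i, p i ^ 2 ≤ 1 := hp1 ▸ Finset.sum_le_sum (fun i _ => hsqle i)
  have hSge : p 0 ^ 2 ≤ ∑ i, p i ^ 2 :=
    Finset.single_le_sum (fun i _ => sq_nonneg (p i)) (Finset.mem_univ 0)
  set g : Fin n → ℝ := fun i => if i = 0 then 0 else p i with hg
  have hterm : ∀ i j : Fin n,
      p i * p j * mhGen discDist i j 0 = g i * g j + (if i = j then g i * g j else 0) := by
    intro i j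
    by_cases hi : i = 0
    · subst hi; simp [mhGen, hg]
    · by_cases hj : j = 0
      · subst hj; simp [mhGen, hg, hi]
      · have h0i : ¬((0:Fin n) = i) := fun h => hi h.symm
        have h0j : ¬((0:Fin n) = j) := fun h => hj h.symm
        by_cases hij : i = j
        · subst hij
          simp only [mhGen, discDist, hg, h0i, or_self, if_false, if_pos rfl, if_neg hi]
          norm_num
          ring
        · simp only [mhGen, discDist, hg, h0i, h0j, or_self, if_false, if_neg hi, if_neg hj,
            if_neg hij]
          norm_num
  have hsum : ∑ i, ∑ j, p i * p j * mhGen discDist i j 0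
      = (∑ i, g i) ^ 2 + ∑ i, g i ^ 2 := by
    simp only [hterm, Finset.sum_add_distrib]
    congr 1
    · rw [sq, Finset.sum_mul_sum]
    · refine Finset.sum_congr rfl fun i _ => ?_
      rw [Finset.sum_ite_eq]
      simp [sq]
  have hgsum : ∑ i, g i = 1 - p 0 := by
    have h1 : ∑ i, g i = ∑ i, (p i - if i = 0 then p i else 0) := by
      refine Finset.sum_congr rfl fun i _ => ?_
      by_cases hi : i = 0 <;> simp [hg, hi]
    rw [h1, Finset.sum_sub_distrib, hp1, Finset.sum_ite_eq' Finset.univ 0 p]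
    simp
  have hgsq : ∑ i, g i ^ 2 = (∑ i, p i ^ 2) - p 0 ^ 2 := by
    have h1 : ∑ i, g i ^ 2 = ∑ i, (p i ^ 2 - if i = 0 then p i ^ 2 else 0) := by
      refine Finset.sum_congr rfl fun i _ => ?_
      by_cases hi : i = 0 <;> simp [hg, hi]
    rw [h1, Finset.sum_sub_distrib, Finset.sum_ite_eq' Finset.univ 0 (fun i => p i ^ 2)]
    simp
  have hform : discDepth p 0 = (1 / 2) * (1 - ∑ i, p i ^ 2) + p 0 := by
    rw [discDepth, hsum, hgsum, hgsq]; ring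
  have hone : ∀ i : Fin n, p i = 1 → ∀ j, j ≠ i → p j = 0 := by
    intro i hi j hj
    have h1 : ∑ k ∈ Finset.univ.erase i, p k = 0 := by
      have h2 := Finset.sum_erase_add Finset.univ p (Finset.mem_univ i)
      rw [hp1, hi] at h2
      linarith
    exact (Finset.sum_eq_zero_iff_of_nonneg (fun k _ => hp0 k)).1 h1 j
      (Finset.mem_erase.2 ⟨hj, Finset.mem_univ j⟩)
  refine ⟨hform, ⟨by rw [hform]; nlinarith [hp0 0], by rw [hform]; nlinarith [sq_nonneg (1 - p 0)]⟩,
    ?_, ?_⟩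
  · constructor
    · intro hD
      rw [hform] at hD
      have hp00 : p 0 = 0 := by nlinarith [hSle, hp0 0]
      have hS : ∑ i, p i ^ 2 = 1 := by nlinarith [hSle, hp0 0]
      have hz : ∀ i : Fin n, p i - p i ^ 2 = 0 := by
        have hsum0 : ∑ i, (p i - p i ^ 2) = 0 := by
          rw [Finset.sum_sub_distrib, hp1, hS]; ring
        intro i
        exact (Finset.sum_eq_zero_iff_of_nonneg (fun k _ => by linarith [hsqle k])).1 hsum0 i
          (Finset.mem_univ i)
      have hcases : ∀ i : Fin n, p i = 0 ∨ p i = 1 := by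
        intro i
        have h := hz i
        rcases mul_eq_zero.1 (show p i * (1 - p i) = 0 by nlinarith) with h1 | h1
        · exact Or.inl h1
        · exact Or.inr (by linarith)
      have hex : ∃ i, p i = 1 := by
        by_contra h
        push_neg at h
        have hall : ∀ i, p i = 0 := fun i => (hcases i).resolve_right (h i)
        rw [Finset.sum_congr rfl (fun i _ => hall i)] at hp1
        simp at hp1
      obtain ⟨i, hi⟩ := hex
      refine ⟨i, ⟨?_, hi⟩, ?_⟩
      · rintro rfl; rw [hp00] at hi; norm_num at hi
      · rintro j ⟨-, hj1⟩
        by_contra hne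
        have := hone i hi j hne
        rw [this] at hj1; norm_num at hj1
    · rintro ⟨i, ⟨hi0, hi1⟩, -⟩
      have hz := hone i hi1
      have hp00 : p 0 = 0 := hz 0 (Ne.symm hi0)
      have hS : ∑ j, p j ^ 2 = 1 := by
        rw [Finset.sum_eq_single i (fun j _ hj => by rw [hz j hj]; ring)
          (fun h => absurd (Finset.mem_univ i) h), hi1]
        norm_num
      rw [hform, hS, hp00]; ring
  · constructor
    · intro hD
      rw [hform] at hD
      nlinarith [hSge, sq_nonneg (1 - p 0)]
    · intro hp01
      have hz := hone 0 hp01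
      have hS : ∑ j, p j ^ 2 = 1 := by
        rw [Finset.sum_eq_single 0 (fun j _ hj => by rw [hz j hj]; ring)
          (fun h => absurd (Finset.mem_univ 0) h), hp01]
        norm_num
      rw [hform, hS]; linarith
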